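/- (Proposition 5, relative near-optimality.) Under Condition 1 and Assumption SA1, let α ∈ (0,1) satisfy αP̄ ⪯ Q_i for all i ∈ 𝕄 and α₀ > 0 satisfy α₀(P̄ − P̲) ⪯ Q_i for all i ∈ 𝕄. Then for every integer d > 1 and every x ∈ ℝⁿ with x ≠ 0, the value V*(x) is finite and strictly positive, and (V*(x) − V*_d(x)) / V*(x) ≤ (1/α₀)·(1−α)^{d−1}. -/

import Mathlib

open Matrix Filter
open scoped ENNReal

/-- Data of a switched linear-quadratic problem with `M` modes,
state dimension `n` and continuous-input dimension `m`. -/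
structure SwitchedLQR (n m M : ℕ) where
  A : Fin M → Matrix (Fin n) (Fin n) ℝ
  B : Fin M → Matrix (Fin n) (Fin m) ℝ
  Q : Fin M → Matrix (Fin n) (Fin n) ℝ
  R : Fin M → Matrix (Fin m) (Fin m) ℝ

namespace SwitchedLQR

variable {n m M : ℕ}

/-- Stage cost `ℓ(x,u,i) = xᵀQᵢx + uᵀRᵢu`. -/
def ell (S : SwitchedLQR n m M) (x : Fin n → ℝ) (u : Fin m → ℝ) (i : Fin M) : ℝ :=
  x ⬝ᵥ ((S.Q i) *ᵥ x) + u ⬝ᵥ ((S.R i) *ᵥ u)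

/-- Riccati operator `𝓡ᵢ(P)`. -/
noncomputable def Ric (S : SwitchedLQR n m M) (i : Fin M)
    (P : Matrix (Fin n) (Fin n) ℝ) : Matrix (Fin n) (Fin n) ℝ :=
  S.Q i + (S.A i)ᵀ * P * S.A i -
    (S.A i)ᵀ * P * S.B i * (S.R i + (S.B i)ᵀ * P * S.B i)⁻¹ * ((S.B i)ᵀ * P * S.A i)

/-- `P_𝐢 = 𝓡_{i₀}(𝓡_{i₁}(⋯𝓡_{i_{d-1}}(P̲)⋯))` for a finite mode sequence `𝐢`. -/
noncomputable def Pseq (S : SwitchedLQR n m M) (Pund : Matrix (Fin n) (Fin n) ℝ)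
    (l : List (Fin M)) : Matrix (Fin n) (Fin n) ℝ :=
  l.foldr S.Ric Pund

/-- Solution `φ(k,x,u,i)` of the switched linear system. -/
def phi (S : SwitchedLQR n m M) (x : Fin n → ℝ) (u : ℕ → Fin m → ℝ) (is : ℕ → Fin M) :
    ℕ → Fin n → ℝ
  | 0 => x
  | k + 1 => S.A (is k) *ᵥ (phi S x u is k) + S.B (is k) *ᵥ (u k)

/-- Finite-horizon cost `J_d` with terminal cost matrix `P̲`. -/
noncomputable def Jd (S : SwitchedLQR n m M) (Pund : Matrix (Fin n) (Fin n) ℝ) (d : ℕ)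
    (x : Fin n → ℝ) (u : ℕ → Fin m → ℝ) (is : ℕ → Fin M) : ℝ :=
  (∑ k ∈ Finset.range d, S.ell (S.phi x u is k) (u k) (is k)) +
    (S.phi x u is d) ⬝ᵥ (Pund *ᵥ (S.phi x u is d))

/-- Infinite-horizon cost `J(x,u,i) ∈ [0,∞]`. -/
noncomputable def Jinf (S : SwitchedLQR n m M) (x : Fin n → ℝ) (u : ℕ → Fin m → ℝ)
    (is : ℕ → Fin M) : ℝ≥0∞ :=
  ∑' k : ℕ, ENNReal.ofReal (S.ell (S.phi x u is k) (u k) (is k))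

/-- Optimal value function `V*(x)`. -/
noncomputable def Vstar (S : SwitchedLQR n m M) (x : Fin n → ℝ) : ℝ≥0∞ :=
  ⨅ (u : ℕ → Fin m → ℝ) (is : ℕ → Fin M), S.Jinf x u is

/-- `V*_d(x)`: minimum over length-`d` mode sequences `𝐢` of `xᵀP_𝐢x`. -/
noncomputable def Vd (S : SwitchedLQR n m M) (Pund : Matrix (Fin n) (Fin n) ℝ) (d : ℕ)
    (x : Fin n → ℝ) : ℝ :=
  sInf {r : ℝ | ∃ l : List (Fin M), l.length = d ∧ r = x ⬝ᵥ ((S.Pseq Pund l) *ᵥ x)}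

/-- Condition 1: the LMI block matrix is positive semi-definite for every mode. -/
def Cond1 (S : SwitchedLQR n m M) (Pund : Matrix (Fin n) (Fin n) ℝ) : Prop :=
  ∀ i : Fin M,
    (Matrix.fromBlocks
      ((S.A i)ᵀ * Pund * S.A i - Pund + S.Q i) ((S.A i)ᵀ * Pund * S.B i)
      ((S.B i)ᵀ * Pund * S.A i) (S.R i + (S.B i)ᵀ * Pund * S.B i)).PosSemidef

/-- Assumption SA1. -/
def SA1 (S : SwitchedLQR n m M) (Pbar : Matrix (Fin n) (Fin n) ℝ) : Prop :=
  Pbar.PosDef ∧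
    ∀ x : Fin n → ℝ, ∃ (u : ℕ → Fin m → ℝ) (is : ℕ → Fin M),
      S.Jinf x u is = S.Vstar x ∧ S.Vstar x ≤ ENNReal.ofReal (x ⬝ᵥ (Pbar *ᵥ x))

/-- `H*_d(x)`. -/
noncomputable def HStar (S : SwitchedLQR n m M) (Pund : Matrix (Fin n) (Fin n) ℝ) (d : ℕ)
    (x : Fin n → ℝ) : Set ((Fin m → ℝ) × Fin M) :=
  {p | S.Vd Pund d x =
        S.ell x p.1 p.2 + S.Vd Pund (d - 1) (S.A p.2 *ᵥ x + S.B p.2 *ᵥ p.1)}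

/-- `F_d(x)`. -/
noncomputable def Fd (S : SwitchedLQR n m M) (Pund : Matrix (Fin n) (Fin n) ℝ) (d : ℕ)
    (x : Fin n → ℝ) : Set (Fin n → ℝ) :=
  {y | ∃ p ∈ S.HStar Pund d x, y = S.A p.2 *ᵥ x + S.B p.2 *ᵥ p.1}

end SwitchedLQR

/-!
Completing the square gives `xᵀ𝓡ᵢ(P)x = min_u [ℓ(x,u,i) + (Aᵢx + Bᵢu)ᵀP(Aᵢx + Bᵢu)]`, so `V*_d`
obeys the one-step Bellman inequality `V*_{d+1}(x) ≤ ℓ(x,u,i) + V*_d(Aᵢx + Bᵢu)`. Condition 1 says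
that `xᵀP̲x` decreases by at most the stage cost along any step, which makes it, and then by
induction every `V*_d`, a lower bound for the cost of any trajectory; hence `V*_d ≤ V*`.
Along a minimising mode sequence the relative gap `(V* - xᵀP_𝐢x) / xᵀP_𝐢x` then contracts by
the factor `1 - α` per Riccati step and is at most `1/α₀` after the last one.
-/

section QuadraticForm

variable {ι κ : Type*} [Fintype ι] [Fintype κ]

lemma dotProduct_transpose_mulVec' (C : Matrix κ ι ℝ) (v : ι → ℝ) (z : κ → ℝ) :
    v ⬝ᵥ (Cᵀ *ᵥ z) = (C *ᵥ v) ⬝ᵥ z := by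
  rw [dotProduct_mulVec, vecMul_transpose]

lemma Matrix.IsSymm.dotProduct_mulVec_comm {P : Matrix ι ι ℝ} (hP : P.IsSymm) (v z : ι → ℝ) :
    v ⬝ᵥ (P *ᵥ z) = z ⬝ᵥ (P *ᵥ v) := by
  conv_lhs => rw [← hP.eq]
  rw [dotProduct_transpose_mulVec', dotProduct_comm]

lemma Matrix.PosSemidef.dotProduct_mulVec_self_nonneg {P : Matrix ι ι ℝ} (hP : P.PosSemidef)
    (x : ι → ℝ) : 0 ≤ x ⬝ᵥ (P *ᵥ x) := by
  simpa using hP.dotProduct_mulVec_nonneg x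

lemma Matrix.PosSemidef.smul_dotProduct_mulVec_le {P₁ P₂ : Matrix ι ι ℝ} {c : ℝ}
    (h : (P₁ - c • P₂).PosSemidef) (x : ι → ℝ) :
    c * (x ⬝ᵥ (P₂ *ᵥ x)) ≤ x ⬝ᵥ (P₁ *ᵥ x) := by
  have h₀ := h.dotProduct_mulVec_self_nonneg x
  simp only [sub_mulVec, dotProduct_sub, smul_mulVec, dotProduct_smul, smul_eq_mul] at h₀
  linarith

lemma sum_elim_dotProduct_sum_elim (x p : ι → ℝ) (u q : κ → ℝ) :
    Sum.elim x u ⬝ᵥ Sum.elim p q = x ⬝ᵥ p + u ⬝ᵥ q := by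
  simp [dotProduct, Fintype.sum_sum_type]

lemma dotProduct_mulVec_smul_smul (P : Matrix ι ι ℝ) (t : ℝ) (w : ι → ℝ) :
    (t • w) ⬝ᵥ (P *ᵥ (t • w)) = t ^ 2 * (w ⬝ᵥ (P *ᵥ w)) := by
  rw [mulVec_smul, smul_dotProduct, dotProduct_smul, smul_eq_mul, smul_eq_mul]; ring

/-- `K` is the maximum of the ratio of the two forms on the (compact) unit sphere. -/
lemma Matrix.PosDef.exists_dotProduct_mulVec_le_mul (P : Matrix ι ι ℝ) {Q : Matrix ι ι ℝ}
    (hQ : Q.PosDef) : ∃ K, 0 ≤ K ∧ ∀ v, v ⬝ᵥ (P *ᵥ v) ≤ K * (v ⬝ᵥ (Q *ᵥ v)) := by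
  have hQpos : ∀ v : ι → ℝ, v ≠ 0 → 0 < v ⬝ᵥ (Q *ᵥ v) := fun v hv => by
    simpa using hQ.dotProduct_mulVec_pos hv
  have hcont : ContinuousOn (fun w : ι → ℝ => w ⬝ᵥ (P *ᵥ w) / w ⬝ᵥ (Q *ᵥ w))
      (Metric.sphere 0 1) := by
    refine ContinuousOn.div (by fun_prop) (by fun_prop) fun w hw => (hQpos w ?_).ne'
    rintro rfl
    simp at hw
  obtain ⟨K, hK⟩ := (isCompact_sphere (0 : ι → ℝ) 1).bddAbove_image hcont
  refine ⟨max K 0, le_max_right _ _, fun v => ?_⟩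
  rcases eq_or_ne v 0 with rfl | hv
  · simp
  have hnorm : 0 < ‖v‖ := norm_pos_iff.mpr hv
  set w := ‖v‖⁻¹ • v
  have hw : w ∈ Metric.sphere (0 : ι → ℝ) 1 := by
    simp [w, norm_smul, hnorm.ne']
  have hvw : v = ‖v‖ • w := by simp [w, smul_smul, hnorm.ne']
  have hratio : w ⬝ᵥ (P *ᵥ w) ≤ max K 0 * (w ⬝ᵥ (Q *ᵥ w)) := by
    have hwQ := hQpos w (by rintro h; simp [h] at hw)
    rw [← div_le_iff₀ hwQ]
    exact (hK ⟨w, hw, rfl⟩).trans (le_max_left _ _)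
  have hscale : ∀ R : Matrix ι ι ℝ, v ⬝ᵥ (R *ᵥ v) = ‖v‖ ^ 2 * (w ⬝ᵥ (R *ᵥ w)) := fun R => by
    rw [← dotProduct_mulVec_smul_smul, ← hvw]
  rw [hscale P, hscale Q, mul_left_comm]
  gcongr

lemma dotProduct_mulVec_completeSquare [DecidableEq κ] (A : Matrix ι ι ℝ) (B : Matrix ι κ ℝ)
    (Q P : Matrix ι ι ℝ) (R : Matrix κ κ ℝ) (hP : P.IsSymm) (hR : R.IsSymm)
    (hS : IsUnit (R + Bᵀ * P * B)) (x : ι → ℝ) (u : κ → ℝ) :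
    x ⬝ᵥ (Q *ᵥ x) + u ⬝ᵥ (R *ᵥ u) + (A *ᵥ x + B *ᵥ u) ⬝ᵥ (P *ᵥ (A *ᵥ x + B *ᵥ u))
      = x ⬝ᵥ ((Q + Aᵀ * P * A - Aᵀ * P * B * (R + Bᵀ * P * B)⁻¹ * (Bᵀ * P * A)) *ᵥ x)
        + (u + (R + Bᵀ * P * B)⁻¹ *ᵥ (Bᵀ *ᵥ (P *ᵥ (A *ᵥ x)))) ⬝ᵥ
            ((R + Bᵀ * P * B) *ᵥ (u + (R + Bᵀ * P * B)⁻¹ *ᵥ (Bᵀ *ᵥ (P *ᵥ (A *ᵥ x))))) := by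
  set S := R + Bᵀ * P * B with hSdef
  have hSsymm : S.IsSymm := hR.add (by simp [IsSymm, Matrix.mul_assoc, hP.eq])
  set a := A *ᵥ x
  set w := Bᵀ *ᵥ (P *ᵥ a) with hw
  have hSinv : S *ᵥ (S⁻¹ *ᵥ w) = w := by
    rw [mulVec_mulVec, mul_nonsing_inv _ ((isUnit_iff_isUnit_det S).mp hS), one_mulVec]
  have h₁ : a ⬝ᵥ (P *ᵥ (B *ᵥ u)) = u ⬝ᵥ w := by
    rw [hP.dotProduct_mulVec_comm, hw, dotProduct_transpose_mulVec']
  have h₂ : (B *ᵥ u) ⬝ᵥ (P *ᵥ a) = u ⬝ᵥ w := by rw [hw, dotProduct_transpose_mulVec']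
  have h₃ : (B *ᵥ u) ⬝ᵥ (P *ᵥ (B *ᵥ u)) = u ⬝ᵥ (Bᵀ *ᵥ (P *ᵥ (B *ᵥ u))) := by
    rw [dotProduct_transpose_mulVec']
  have h₄ : (S⁻¹ *ᵥ w) ⬝ᵥ (S *ᵥ u) = u ⬝ᵥ w := by
    rw [hSsymm.dotProduct_mulVec_comm, hSinv]
  have h₅ : (S⁻¹ *ᵥ w) ⬝ᵥ (S *ᵥ (S⁻¹ *ᵥ w)) = w ⬝ᵥ (S⁻¹ *ᵥ w) := by
    rw [hSinv, dotProduct_comm]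
  have h₆ : a ⬝ᵥ (P *ᵥ (B *ᵥ (S⁻¹ *ᵥ w))) = w ⬝ᵥ (S⁻¹ *ᵥ w) := by
    rw [hP.dotProduct_mulVec_comm, ← dotProduct_transpose_mulVec' B (S⁻¹ *ᵥ w) (P *ᵥ a), ← hw,
      dotProduct_comm]
  have h₇ : u ⬝ᵥ (S *ᵥ u) = u ⬝ᵥ (R *ᵥ u) + u ⬝ᵥ (Bᵀ *ᵥ (P *ᵥ (B *ᵥ u))) := by
    simp only [hSdef, add_mulVec, dotProduct_add, ← mulVec_mulVec]
  simp only [add_mulVec, sub_mulVec, mulVec_add, dotProduct_add, add_dotProduct, dotProduct_sub,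
    ← mulVec_mulVec]
  simp only [dotProduct_transpose_mulVec' A x]
  rw [h₁, h₂, h₃, h₄, h₅, h₆, hSinv, h₇]
  ring

end QuadraticForm

namespace SwitchedLQR

section

variable {n m M : ℕ} (S : SwitchedLQR n m M)

def step (i : Fin M) (x : Fin n → ℝ) (u : Fin m → ℝ) : Fin n → ℝ :=
  S.A i *ᵥ x + S.B i *ᵥ u

noncomputable def feedback (i : Fin M) (P : Matrix (Fin n) (Fin n) ℝ) (x : Fin n → ℝ) :
    Fin m → ℝ :=
  -((S.R i + (S.B i)ᵀ * P * S.B i)⁻¹ *ᵥ ((S.B i)ᵀ *ᵥ (P *ᵥ (S.A i *ᵥ x))))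

lemma phi_succ (x : Fin n → ℝ) (u : ℕ → Fin m → ℝ) (is : ℕ → Fin M) (k : ℕ) :
    S.phi x u is (k + 1) = S.step (is k) (S.phi x u is k) (u k) := rfl

variable {S}

lemma ell_nonneg {i : Fin M} (hQ : (S.Q i).PosSemidef) (hR : (S.R i).PosSemidef)
    (x : Fin n → ℝ) (u : Fin m → ℝ) : 0 ≤ S.ell x u i :=
  add_nonneg (hQ.dotProduct_mulVec_self_nonneg x) (hR.dotProduct_mulVec_self_nonneg u)

lemma quad_Q_le_ell {i : Fin M} (hR : (S.R i).PosSemidef) (x : Fin n → ℝ) (u : Fin m → ℝ) :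
    x ⬝ᵥ (S.Q i *ᵥ x) ≤ S.ell x u i :=
  le_add_of_nonneg_right (hR.dotProduct_mulVec_self_nonneg u)

lemma posDef_R_add {i : Fin M} {P : Matrix (Fin n) (Fin n) ℝ} (hP : P.PosSemidef)
    (hR : (S.R i).PosDef) : (S.R i + (S.B i)ᵀ * P * S.B i).PosDef := by
  refine hR.add_posSemidef ?_
  simpa using hP.conjTranspose_mul_mul_same (S.B i)

lemma ell_add_quad_step_eq {i : Fin M} {P : Matrix (Fin n) (Fin n) ℝ} (hP : P.PosSemidef)
    (hR : (S.R i).PosDef) (x : Fin n → ℝ) (u : Fin m → ℝ) :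
    S.ell x u i + S.step i x u ⬝ᵥ (P *ᵥ S.step i x u)
      = x ⬝ᵥ (S.Ric i P *ᵥ x) + (u - S.feedback i P x) ⬝ᵥ
          ((S.R i + (S.B i)ᵀ * P * S.B i) *ᵥ (u - S.feedback i P x)) := by
  rw [feedback, sub_neg_eq_add]
  exact dotProduct_mulVec_completeSquare _ _ _ _ _ (isHermitian_iff_isSymm.mp hP.isHermitian)
    (isHermitian_iff_isSymm.mp hR.isHermitian) (posDef_R_add hP hR).isUnit x u

lemma quad_Ric_le {i : Fin M} {P : Matrix (Fin n) (Fin n) ℝ} (hP : P.PosSemidef)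
    (hR : (S.R i).PosDef) (x : Fin n → ℝ) (u : Fin m → ℝ) :
    x ⬝ᵥ (S.Ric i P *ᵥ x) ≤ S.ell x u i + S.step i x u ⬝ᵥ (P *ᵥ S.step i x u) := by
  rw [ell_add_quad_step_eq hP hR]
  exact le_add_of_nonneg_right
    ((posDef_R_add hP hR).posSemidef.dotProduct_mulVec_self_nonneg _)

lemma quad_Ric_eq {i : Fin M} {P : Matrix (Fin n) (Fin n) ℝ} (hP : P.PosSemidef)
    (hR : (S.R i).PosDef) (x : Fin n → ℝ) :
    x ⬝ᵥ (S.Ric i P *ᵥ x) = S.ell x (S.feedback i P x) i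
      + S.step i x (S.feedback i P x) ⬝ᵥ (P *ᵥ S.step i x (S.feedback i P x)) := by
  simp [ell_add_quad_step_eq hP hR]

lemma Ric_posSemidef {i : Fin M} {P : Matrix (Fin n) (Fin n) ℝ} (hQ : (S.Q i).PosSemidef)
    (hR : (S.R i).PosDef) (hP : P.PosSemidef) : (S.Ric i P).PosSemidef := by
  have hPt := hP.isHermitian
  have hQt := hQ.isHermitian
  have hRt := hR.isHermitian
  rw [isHermitian_iff_isSymm] at hPt hQt hRt
  refine .of_dotProduct_mulVec_nonneg ?_ fun y => ?_
  · rw [isHermitian_iff_isSymm, IsSymm, Ric]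
    simp only [transpose_sub, transpose_add, transpose_mul, transpose_transpose, hPt.eq, hQt.eq,
      transpose_nonsing_inv, hRt.eq, Matrix.mul_assoc]
  · rw [star_trivial, quad_Ric_eq hP hR]
    exact add_nonneg (ell_nonneg hQ hR.posSemidef _ _) (hP.dotProduct_mulVec_self_nonneg _)

lemma Pseq_posSemidef {Pund : Matrix (Fin n) (Fin n) ℝ} (hPund : Pund.PosSemidef)
    (hQ : ∀ i, (S.Q i).PosSemidef) (hR : ∀ i, (S.R i).PosDef) :
    ∀ l : List (Fin M), (S.Pseq Pund l).PosSemidef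
  | [] => hPund
  | i :: l => Ric_posSemidef (hQ i) (hR i) (Pseq_posSemidef hPund hQ hR l)

lemma quad_Q_le_Ric {i : Fin M} {P : Matrix (Fin n) (Fin n) ℝ} (hP : P.PosSemidef)
    (hR : (S.R i).PosDef) (x : Fin n → ℝ) : x ⬝ᵥ (S.Q i *ᵥ x) ≤ x ⬝ᵥ (S.Ric i P *ᵥ x) := by
  rw [quad_Ric_eq hP hR]
  exact (quad_Q_le_ell hR.posSemidef x _).trans
    (le_add_of_nonneg_right (hP.dotProduct_mulVec_self_nonneg _))

lemma Cond1.quad_le_ell_add {Pund : Matrix (Fin n) (Fin n) ℝ} (hC : S.Cond1 Pund) (i : Fin M)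
    (x : Fin n → ℝ) (u : Fin m → ℝ) :
    x ⬝ᵥ (Pund *ᵥ x) ≤ S.ell x u i + S.step i x u ⬝ᵥ (Pund *ᵥ S.step i x u) := by
  have h := (hC i).dotProduct_mulVec_nonneg (Sum.elim x u)
  rw [star_trivial, fromBlocks_mulVec] at h
  simp only [Sum.elim_comp_inl, Sum.elim_comp_inr, sum_elim_dotProduct_sum_elim] at h
  simp only [ell, step, add_mulVec, sub_mulVec, mulVec_add, dotProduct_add, add_dotProduct,
    dotProduct_sub, ← mulVec_mulVec, dotProduct_transpose_mulVec'] at h ⊢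
  linarith

lemma Cond1.quad_le_Ric {Pund : Matrix (Fin n) (Fin n) ℝ} (hC : S.Cond1 Pund)
    (hPund : Pund.PosSemidef) {i : Fin M} (hR : (S.R i).PosDef) (x : Fin n → ℝ) :
    x ⬝ᵥ (Pund *ᵥ x) ≤ x ⬝ᵥ (S.Ric i Pund *ᵥ x) :=
  (quad_Ric_eq hPund hR x).symm ▸ hC.quad_le_ell_add i x _

end

section

variable {n m M : ℕ} {S : SwitchedLQR n m M} {Pund : Matrix (Fin n) (Fin n) ℝ}

lemma Vd_zero (x : Fin n → ℝ) : S.Vd Pund 0 x = x ⬝ᵥ (Pund *ᵥ x) := by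
  simp [Vd, Pseq, List.length_eq_zero_iff]

variable (S Pund) in
lemma exists_Vd_eq [Nonempty (Fin M)] (d : ℕ) (x : Fin n → ℝ) :
    ∃ l : List (Fin M), l.length = d ∧ S.Vd Pund d x = x ⬝ᵥ (S.Pseq Pund l *ᵥ x) := by
  have hfin : {r : ℝ | ∃ l : List (Fin M), l.length = d ∧ r = x ⬝ᵥ (S.Pseq Pund l *ᵥ x)}.Finite :=
    (Set.finite_range fun f : Fin d → Fin M => x ⬝ᵥ (S.Pseq Pund (List.ofFn f) *ᵥ x)).subset <| by
      rintro r ⟨l, rfl, rfl⟩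
      exact ⟨l.get, by simp⟩
  have hne : {r : ℝ | ∃ l : List (Fin M), l.length = d ∧ r = x ⬝ᵥ (S.Pseq Pund l *ᵥ x)}.Nonempty :=
    ⟨_, List.replicate d (Classical.arbitrary _), by simp, rfl⟩
  exact hne.csInf_mem hfin

variable (hPund : Pund.PosSemidef) (hQ : ∀ i, (S.Q i).PosSemidef) (hR : ∀ i, (S.R i).PosDef)
include hPund hQ hR

lemma Vd_le (l : List (Fin M)) (x : Fin n → ℝ) :
    S.Vd Pund l.length x ≤ x ⬝ᵥ (S.Pseq Pund l *ᵥ x) := by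
  refine csInf_le ⟨0, ?_⟩ ⟨l, rfl, rfl⟩
  rintro _ ⟨l', -, rfl⟩
  exact (Pseq_posSemidef hPund hQ hR l').dotProduct_mulVec_self_nonneg x

lemma Vd_nonneg (d : ℕ) (x : Fin n → ℝ) : 0 ≤ S.Vd Pund d x := by
  refine Real.sInf_nonneg ?_
  rintro _ ⟨l, -, rfl⟩
  exact (Pseq_posSemidef hPund hQ hR l).dotProduct_mulVec_self_nonneg x

lemma Vd_succ_le [Nonempty (Fin M)] (d : ℕ) (x : Fin n → ℝ) (u : Fin m → ℝ) (i : Fin M) :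
    S.Vd Pund (d + 1) x ≤ S.ell x u i + S.Vd Pund d (S.step i x u) := by
  obtain ⟨l, rfl, hl⟩ := exists_Vd_eq S Pund d (S.step i x u)
  rw [hl]
  exact (Vd_le hPund hQ hR (i :: l) x).trans
    (quad_Ric_le (Pseq_posSemidef hPund hQ hR l) (hR i) x u)

end

section

variable {n m M : ℕ} {S : SwitchedLQR n m M} {Pund : Matrix (Fin n) (Fin n) ℝ}

variable (S) in
lemma phi_succ_eq_phi_step (x : Fin n → ℝ) (u : ℕ → Fin m → ℝ) (is : ℕ → Fin M) :
    ∀ k, S.phi x u is (k + 1)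
      = S.phi (S.step (is 0) x (u 0)) (fun j => u (j + 1)) (fun j => is (j + 1)) k
  | 0 => rfl
  | k + 1 => by rw [phi_succ, phi_succ_eq_phi_step x u is k]; rfl

variable (S) in
lemma Jinf_eq_ofReal_ell_add (x : Fin n → ℝ) (u : ℕ → Fin m → ℝ) (is : ℕ → Fin M) :
    S.Jinf x u is = ENNReal.ofReal (S.ell x (u 0) (is 0))
      + S.Jinf (S.step (is 0) x (u 0)) (fun j => u (j + 1)) (fun j => is (j + 1)) := by
  rw [Jinf, Jinf, tsum_eq_zero_add' ENNReal.summable]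
  simp only [phi_succ_eq_phi_step]
  rfl


lemma hasSum_ell (hQ : ∀ i, (S.Q i).PosSemidef) (hR : ∀ i, (S.R i).PosSemidef)
    {x : Fin n → ℝ} {u : ℕ → Fin m → ℝ} {is : ℕ → Fin M} (hJ : S.Jinf x u is ≠ ⊤) :
    HasSum (fun k => S.ell (S.phi x u is k) (u k) (is k)) (S.Jinf x u is).toReal := by
  have hnonneg k := ell_nonneg (hQ (is k)) (hR (is k)) (S.phi x u is k) (u k)
  rw [Jinf, ENNReal.tsum_toReal_eq fun _ => ENNReal.ofReal_ne_top]
  simp only [ENNReal.toReal_ofReal (hnonneg _)]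
  exact (ENNReal.summable_toReal hJ).congr (fun k => ENNReal.toReal_ofReal (hnonneg k)) |>.hasSum

lemma Cond1.quad_le_Jd (hC : S.Cond1 Pund) (x : Fin n → ℝ) (u : ℕ → Fin m → ℝ)
    (is : ℕ → Fin M) (N : ℕ) : x ⬝ᵥ (Pund *ᵥ x) ≤ S.Jd Pund N x u is := by
  have hmono : Monotone fun N => S.Jd Pund N x u is := monotone_nat_of_le_succ fun N => by
    have := hC.quad_le_ell_add (is N) (S.phi x u is N) (u N)
    simp only [Jd, Finset.sum_range_succ, phi_succ]
    linarith
  simpa [Jd, phi] using hmono (Nat.zero_le N)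

lemma exists_quad_le_mul_ell (hQ : ∀ i, (S.Q i).PosDef) (hR : ∀ i, (S.R i).PosSemidef)
    (P : Matrix (Fin n) (Fin n) ℝ) :
    ∃ K, ∀ i x u, x ⬝ᵥ (P *ᵥ x) ≤ K * S.ell x u i := by
  choose K hK₀ hK using fun i => (hQ i).exists_dotProduct_mulVec_le_mul P
  refine ⟨∑ i, K i, fun i x u => ?_⟩
  calc x ⬝ᵥ (P *ᵥ x) ≤ K i * (x ⬝ᵥ (S.Q i *ᵥ x)) := hK i x
    _ ≤ (∑ j, K j) * (x ⬝ᵥ (S.Q i *ᵥ x)) :=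
      mul_le_mul_of_nonneg_right (Finset.single_le_sum (fun j _ => hK₀ j) (Finset.mem_univ i))
        ((hQ i).posSemidef.dotProduct_mulVec_self_nonneg x)
    _ ≤ (∑ j, K j) * S.ell x u i :=
      mul_le_mul_of_nonneg_left (quad_Q_le_ell (hR i) x u) (Finset.sum_nonneg fun j _ => hK₀ j)

/-- The terminal term `φ_NᵀP̲φ_N` of the telescoped sum is dominated by the stage cost `ℓ_N`,
which tends to `0` when the total cost is finite. -/
lemma Cond1.ofReal_quad_le_Jinf (hC : S.Cond1 Pund) (hQ : ∀ i, (S.Q i).PosDef)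
    (hR : ∀ i, (S.R i).PosSemidef) (x : Fin n → ℝ) (u : ℕ → Fin m → ℝ) (is : ℕ → Fin M) :
    ENNReal.ofReal (x ⬝ᵥ (Pund *ᵥ x)) ≤ S.Jinf x u is := by
  by_cases hJ : S.Jinf x u is = ⊤
  · simp [hJ]
  obtain ⟨K, hK⟩ := exists_quad_le_mul_ell hQ hR Pund
  have hsum := hasSum_ell (fun i => (hQ i).posSemidef) hR hJ
  have hbound : ∀ N, x ⬝ᵥ (Pund *ᵥ x)
      ≤ (S.Jinf x u is).toReal + K * S.ell (S.phi x u is N) (u N) (is N) := fun N =>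
    (hC.quad_le_Jd x u is N).trans <| add_le_add
      (sum_le_hasSum _ (fun k _ => ell_nonneg (hQ _).posSemidef (hR _) _ _) hsum) (hK _ _ _)
  have hlim := tendsto_const_nhds (x := (S.Jinf x u is).toReal).add
    (hsum.summable.tendsto_atTop_zero.const_mul K)
  refine ENNReal.ofReal_le_of_le_toReal ?_
  simpa using ge_of_tendsto' hlim hbound

variable (hPund : Pund.PosSemidef) (hC : S.Cond1 Pund) (hQ : ∀ i, (S.Q i).PosDef)
  (hR : ∀ i, (S.R i).PosDef)
include hPund hC hQ hR

lemma ofReal_Vd_le_Jinf :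
    ∀ d x u is, ENNReal.ofReal (S.Vd Pund d x) ≤ S.Jinf x u is
  | 0, x, u, is => by
    rw [Vd_zero]
    exact hC.ofReal_quad_le_Jinf hQ (fun i => (hR i).posSemidef) x u is
  | d + 1, x, u, is => by
    have : Nonempty (Fin M) := ⟨is 0⟩
    have hQ' i := (hQ i).posSemidef
    rw [Jinf_eq_ofReal_ell_add]
    calc ENNReal.ofReal (S.Vd Pund (d + 1) x)
        ≤ ENNReal.ofReal (S.ell x (u 0) (is 0) + S.Vd Pund d (S.step (is 0) x (u 0))) :=
          ENNReal.ofReal_le_ofReal (Vd_succ_le hPund hQ' hR d x (u 0) (is 0))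
      _ = ENNReal.ofReal (S.ell x (u 0) (is 0))
            + ENNReal.ofReal (S.Vd Pund d (S.step (is 0) x (u 0))) :=
          ENNReal.ofReal_add (ell_nonneg (hQ' _) (hR _).posSemidef _ _) (Vd_nonneg hPund hQ' hR _ _)
      _ ≤ _ := add_le_add_right (ofReal_Vd_le_Jinf d _ _ _) _

lemma ofReal_Vd_le_Vstar (d : ℕ) (x : Fin n → ℝ) :
    ENNReal.ofReal (S.Vd Pund d x) ≤ S.Vstar x :=
  le_iInf₂ fun u is => ofReal_Vd_le_Jinf hPund hC hQ hR d x u is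

end

section

variable {n m M : ℕ} {S : SwitchedLQR n m M} {Pbar : Matrix (Fin n) (Fin n) ℝ}

lemma Vstar_le_Jinf (x : Fin n → ℝ) (u : ℕ → Fin m → ℝ) (is : ℕ → Fin M) :
    S.Vstar x ≤ S.Jinf x u is :=
  iInf₂_le (f := fun u is => S.Jinf x u is) u is

lemma Vstar_le_ofReal_ell_add (x : Fin n → ℝ) (u : Fin m → ℝ) (i : Fin M) :
    S.Vstar x ≤ ENNReal.ofReal (S.ell x u i) + S.Vstar (S.step i x u) := by
  simp only [Vstar, ENNReal.add_iInf]
  refine le_iInf₂ fun u' is' => ?_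
  have h := S.Jinf_eq_ofReal_ell_add x (fun k => Nat.casesOn k u u')
    (fun k => Nat.casesOn k i is')
  exact (Vstar_le_Jinf x _ _).trans_eq h

lemma ofReal_mul_quad_le_Vstar {α : ℝ} (hαQ : ∀ i, (S.Q i - α • Pbar).PosSemidef)
    (hR : ∀ i, (S.R i).PosSemidef) (x : Fin n → ℝ) :
    ENNReal.ofReal (α * (x ⬝ᵥ (Pbar *ᵥ x))) ≤ S.Vstar x :=
  le_iInf₂ fun u is => (ENNReal.ofReal_le_ofReal
    (((hαQ (is 0)).smul_dotProduct_mulVec_le x).trans (quad_Q_le_ell (hR (is 0)) x (u 0)))).trans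
    (ENNReal.le_tsum 0)

namespace SA1

variable (hSA : S.SA1 Pbar)
include hSA

lemma Vstar_le (x : Fin n → ℝ) : S.Vstar x ≤ ENNReal.ofReal (x ⬝ᵥ (Pbar *ᵥ x)) :=
  let ⟨_, _, _, h⟩ := hSA.2 x; h

lemma Vstar_ne_top (x : Fin n → ℝ) : S.Vstar x ≠ ⊤ :=
  ne_top_of_le_ne_top ENNReal.ofReal_ne_top (hSA.Vstar_le x)

lemma Vstar_toReal_le (x : Fin n → ℝ) : (S.Vstar x).toReal ≤ x ⬝ᵥ (Pbar *ᵥ x) :=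
  ENNReal.toReal_le_of_le_ofReal (hSA.1.posSemidef.dotProduct_mulVec_self_nonneg x)
    (hSA.Vstar_le x)

lemma Vstar_toReal_le_ell_add {i : Fin M} (hQ : (S.Q i).PosSemidef) (hR : (S.R i).PosSemidef)
    (x : Fin n → ℝ) (u : Fin m → ℝ) :
    (S.Vstar x).toReal ≤ S.ell x u i + (S.Vstar (S.step i x u)).toReal := by
  have h := ENNReal.toReal_mono (ENNReal.add_ne_top.mpr ⟨ENNReal.ofReal_ne_top,
    hSA.Vstar_ne_top _⟩) (Vstar_le_ofReal_ell_add (S := S) x u i)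
  rwa [ENNReal.toReal_add ENNReal.ofReal_ne_top (hSA.Vstar_ne_top _),
    ENNReal.toReal_ofReal (ell_nonneg hQ hR x u)] at h

end SA1

end

section

variable {n m M : ℕ} {S : SwitchedLQR n m M} {Pund Pbar : Matrix (Fin n) (Fin n) ℝ}

/-- Each Riccati step loses the stage cost `ℓ(x,u,i) ≥ αxᵀP̄x ≥ αV*(x)`, and the last one
leaves a gap of at most `xᵀ(P̄ - P̲)x ≤ xᵀQᵢx / α₀`, using `P̲ ⪯ 𝓡ᵢ(P̲)`. -/
lemma Vstar_sub_quad_Pseq_le (hQ : ∀ i, (S.Q i).PosSemidef) (hR : ∀ i, (S.R i).PosDef)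
    (hPund : Pund.PosSemidef) (hC : S.Cond1 Pund) (hSA : S.SA1 Pbar)
    {α : ℝ} (hα0 : 0 < α) (hα1 : α < 1) (hαQ : ∀ i, (S.Q i - α • Pbar).PosSemidef)
    {α₀ : ℝ} (hα₀ : 0 < α₀) (hα₀Q : ∀ i, (S.Q i - α₀ • (Pbar - Pund)).PosSemidef) :
    ∀ (l : List (Fin M)) (i : Fin M) (x : Fin n → ℝ),
      x ⬝ᵥ (S.Pseq Pund (i :: l) *ᵥ x) ≤ (S.Vstar x).toReal →
      (S.Vstar x).toReal - x ⬝ᵥ (S.Pseq Pund (i :: l) *ᵥ x)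
        ≤ 1 / α₀ * (1 - α) ^ l.length * x ⬝ᵥ (S.Pseq Pund (i :: l) *ᵥ x)
  | [], i, x, _ => by
    have hVP := hSA.Vstar_toReal_le x
    have hPundRic := hC.quad_le_Ric hPund (hR i) x
    have hQRic := quad_Q_le_Ric hPund (hR i) x
    have hα₀x := (hα₀Q i).smul_dotProduct_mulVec_le x
    simp only [sub_mulVec, dotProduct_sub] at hα₀x
    simp only [Pseq, List.foldr, List.length_nil, pow_zero, mul_one, one_div, inv_mul_eq_div]
    rw [le_div_iff₀ hα₀]
    nlinarith
  | j :: l, i, x, hW => by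
    set P := S.Pseq Pund (j :: l)
    have hP : P.PosSemidef := Pseq_posSemidef hPund hQ hR (j :: l)
    set y := S.step i x (S.feedback i P x)
    change x ⬝ᵥ (S.Ric i P *ᵥ x) ≤ _ at hW
    have hRic := quad_Ric_eq hP (hR i) x
    have hVstep := hSA.Vstar_toReal_le_ell_add (hQ i) (hR i).posSemidef x
      (S.feedback i P x)
    have hell := quad_Q_le_ell (hR i).posSemidef x (S.feedback i P x)
    have hαx := (hαQ i).smul_dotProduct_mulVec_le x
    have hVP := hSA.Vstar_toReal_le x
    have hcontract : y ⬝ᵥ (P *ᵥ y) ≤ (1 - α) * x ⬝ᵥ (S.Ric i P *ᵥ x) := by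
      nlinarith
    have hgap : (S.Vstar y).toReal - y ⬝ᵥ (P *ᵥ y)
        ≤ 1 / α₀ * (1 - α) ^ l.length * y ⬝ᵥ (P *ᵥ y) :=
      Vstar_sub_quad_Pseq_le hQ hR hPund hC hSA hα0 hα1 hαQ hα₀ hα₀Q l j y (by linarith)
    have hcoef : 0 ≤ 1 / α₀ * (1 - α) ^ l.length := by
      have : 0 ≤ 1 - α := by linarith
      positivity
    calc (S.Vstar x).toReal - x ⬝ᵥ (S.Ric i P *ᵥ x)
        ≤ (S.Vstar y).toReal - y ⬝ᵥ (P *ᵥ y) := by linarith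
      _ ≤ 1 / α₀ * (1 - α) ^ l.length * y ⬝ᵥ (P *ᵥ y) := hgap
      _ ≤ 1 / α₀ * (1 - α) ^ l.length * ((1 - α) * x ⬝ᵥ (S.Ric i P *ᵥ x)) :=
        mul_le_mul_of_nonneg_left hcontract hcoef
      _ = 1 / α₀ * (1 - α) ^ (j :: l).length * x ⬝ᵥ (S.Ric i P *ᵥ x) := by
        rw [List.length_cons, pow_succ]; ring

end

end SwitchedLQR

theorem stmt17_general {n m M : ℕ}
    (S : SwitchedLQR n m M)
    (hQ : ∀ i : Fin M, (S.Q i).PosDef) (hR : ∀ i : Fin M, (S.R i).PosDef)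
    (Pund : Matrix (Fin n) (Fin n) ℝ) (hPund : Pund.PosSemidef)
    (hC : S.Cond1 Pund)
    (Pbar : Matrix (Fin n) (Fin n) ℝ) (hSA : S.SA1 Pbar)
    (α : ℝ) (hα0 : 0 < α) (hα1 : α < 1)
    (hαQ : ∀ i : Fin M, (S.Q i - α • Pbar).PosSemidef)
    (α₀ : ℝ) (hα₀ : 0 < α₀)
    (hα₀Q : ∀ i : Fin M, (S.Q i - α₀ • (Pbar - Pund)).PosSemidef) :
    ∀ (d : ℕ), 1 < d → ∀ x : Fin n → ℝ, x ≠ 0 →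
      S.Vstar x ≠ ⊤ ∧ 0 < (S.Vstar x).toReal ∧
      ((S.Vstar x).toReal - S.Vd Pund d x) / (S.Vstar x).toReal ≤
        1 / α₀ * (1 - α) ^ (d - 1) := by
  intro d hd x hx
  have hV := hSA.Vstar_ne_top x
  have hVpos : 0 < (S.Vstar x).toReal :=
    (mul_pos hα0 (by simpa using hSA.1.dotProduct_mulVec_pos hx)).trans_le <|
      ENNReal.ofReal_le_iff_le_toReal hV |>.mp <|
        SwitchedLQR.ofReal_mul_quad_le_Vstar hαQ (fun i => (hR i).posSemidef) x
  refine ⟨hV, hVpos, ?_⟩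
  obtain ⟨-, is, -⟩ := hSA.2 x
  have : Nonempty (Fin M) := ⟨is 0⟩
  obtain ⟨l, hl, hVd⟩ := SwitchedLQR.exists_Vd_eq S Pund d x
  obtain ⟨i, l, rfl⟩ := List.exists_cons_of_length_pos (l := l) (by omega)
  have hW : x ⬝ᵥ (S.Pseq Pund (i :: l) *ᵥ x) ≤ (S.Vstar x).toReal :=
    hVd ▸ (ENNReal.ofReal_le_iff_le_toReal hV).mp
      (SwitchedLQR.ofReal_Vd_le_Vstar hPund hC hQ hR d x)
  have hgap := SwitchedLQR.Vstar_sub_quad_Pseq_le (fun i => (hQ i).posSemidef) hR hPund hC hSA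
    hα0 hα1 hαQ hα₀ hα₀Q l i x hW
  obtain rfl : d = l.length + 1 := hl.symm
  have hcoef : 0 ≤ 1 / α₀ * (1 - α) ^ l.length := by
    have : 0 ≤ 1 - α := by linarith
    positivity
  rw [div_le_iff₀ hVpos, hVd, Nat.add_sub_cancel]
  linarith [mul_le_mul_of_nonneg_left hW hcoef]

/-- Proposition 5, relative near-optimality: under Condition 1 and
SA1, with `α,α₀` as in eq. (8), for every integer `d > 1` and `x ≠ 0`, `V*(x)` is
finite and strictly positive, and
`(V*(x) - V*_d(x)) / V*(x) ≤ (1/α₀)·(1-α)^{d-1}`. -/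
theorem stmt17 {n m M : ℕ} (hn : 0 < n) (hm : 0 < m) (hM : 0 < M)
    (S : SwitchedLQR n m M)
    (hQ : ∀ i : Fin M, (S.Q i).PosDef) (hR : ∀ i : Fin M, (S.R i).PosDef)
    (Pund : Matrix (Fin n) (Fin n) ℝ) (hPund : Pund.PosSemidef)
    (hC : S.Cond1 Pund)
    (Pbar : Matrix (Fin n) (Fin n) ℝ) (hSA : S.SA1 Pbar)
    (α : ℝ) (hα0 : 0 < α) (hα1 : α < 1)
    (hαQ : ∀ i : Fin M, (S.Q i - α • Pbar).PosSemidef)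
    (α₀ : ℝ) (hα₀ : 0 < α₀)
    (hα₀Q : ∀ i : Fin M, (S.Q i - α₀ • (Pbar - Pund)).PosSemidef) :
    ∀ (d : ℕ), 1 < d → ∀ x : Fin n → ℝ, x ≠ 0 →
      S.Vstar x ≠ ⊤ ∧ 0 < (S.Vstar x).toReal ∧
      ((S.Vstar x).toReal - S.Vd Pund d x) / (S.Vstar x).toReal ≤
        1 / α₀ * (1 - α) ^ (d - 1) :=
  stmt17_general S hQ hR Pund hPund hC Pbar hSA α hα0 hα1 hαQ α₀ hα₀ hα₀Q
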